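/- arXiv:1303.5301 — 6 statements merged into one kernel-verified Lean document; each statement's English description precedes it below -/
import Mathlib

section
/- For 0 < α < 1, the phase lead of the fractional Clegg integrator over the integer-order integrator, defined as π/2 + arg N_FCI(ω) with N_FCI(ω) = (4/(π ω^α))·(sin(απ/2) + (π/4)e^{−iαπ/2}), is strictly greater than the phase lead (1−α)·π/2 of the linear fractional integrator of order α over the integer-order integrator. -/
open Real

/-- For `0 < α < 1` the phase lead of the fractional Clegg integrator over the
integer-order integrator, `π/2 + arg N_FCI(ω)`, is strictly greater than the phase lead
`(1-α)π/2` of the linear fractional integrator of order `α`. -/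
theorem fci_phase_lead_gt_fi (α ω : ℝ) (hα : 0 < α) (hα1 : α < 1) (hω : 0 < ω) :
    (1 - α) * π / 2 <
      π / 2 + Complex.arg (((4 / (π * ω ^ α) : ℝ) : ℂ) *
        (((Real.sin (α * π / 2) : ℝ) : ℂ) +
          ((π / 4 : ℝ) : ℂ) * Complex.exp (-Complex.I * ((α * π / 2 : ℝ) : ℂ)))) := by
  have hπ := Real.pi_pos
  set a := α * π / 2 with ha
  have ha0 : 0 < a := by positivity
  have ha2 : a < π / 2 := by
    rw [ha, div_lt_div_iff₀ (by norm_num) (by norm_num)]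
    nlinarith
  have hsin : 0 < Real.sin a := Real.sin_pos_of_pos_of_lt_pi ha0 (lt_trans ha2 (by linarith))
  have hcos : 0 < Real.cos a := Real.cos_pos_of_mem_Ioo ⟨by linarith, ha2⟩
  -- rewrite the exponential
  have hexp : Complex.exp (-Complex.I * ((a : ℝ) : ℂ)) =
      ((Real.cos a : ℝ) : ℂ) + ((-Real.sin a : ℝ) : ℂ) * Complex.I := by
    rw [show (-Complex.I * ((a : ℝ) : ℂ)) = ((-a : ℝ) : ℂ) * Complex.I by push_cast; ring,
      Complex.exp_mul_I]
    push_cast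
    simp [← Complex.ofReal_cos, ← Complex.ofReal_sin, Real.cos_neg, Real.sin_neg]
  set z : ℂ := (((Real.sin a : ℝ) : ℂ) + ((π / 4 : ℝ) : ℂ) *
      Complex.exp (-Complex.I * ((a : ℝ) : ℂ))) with hz
  have hre : z.re = Real.sin a + π / 4 * Real.cos a := by
    rw [hz, hexp]
    simp only [Complex.add_re, Complex.ofReal_re, Complex.mul_re, Complex.add_im,
      Complex.ofReal_im, Complex.mul_im, Complex.I_re, Complex.I_im]
    ring
  have him : z.im = -(π / 4 * Real.sin a) := by
    rw [hz, hexp]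
    simp only [Complex.add_im, Complex.ofReal_im, Complex.mul_im, Complex.add_re,
      Complex.ofReal_re, Complex.mul_re, Complex.I_re, Complex.I_im]
    ring
  have hrepos : 0 < z.re := by rw [hre]; positivity
  have hr : 0 < 4 / (π * ω ^ α) := by positivity
  rw [Complex.arg_real_mul _ hr]
  -- arg z = arctan (z.im / z.re)
  have hargbound : |z.arg| < π / 2 :=
    Complex.abs_arg_lt_pi_div_two_iff.2 (Or.inl hrepos)
  have harg : z.arg = Real.arctan (z.im / z.re) := by
    rw [← Complex.tan_arg, Real.arctan_tan (neg_lt_of_abs_lt hargbound)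
      (lt_of_abs_lt hargbound)]
  rw [harg]
  have key : -Real.tan a < z.im / z.re := by
    rw [Real.tan_eq_sin_div_cos, him, neg_div, neg_lt_neg_iff,
      div_lt_div_iff₀ hrepos hcos, hre]
    nlinarith [sq_nonneg (Real.sin a)]
  have := Real.arctan_strictMono key
  rw [Real.arctan_neg, Real.arctan_tan (by linarith) ha2] at this
  linarith
end

section
/- Let A_R ∈ ℝ^{n×n} with A_R = diag(I_{n−m}, 0_m) and let P ∈ ℝ^{n×n} be symmetric positive definite. If the last m rows of P have the form [β C, 0, P_R] for some vector β ∈ ℝ^m, i.e. [0 0 I_m] P = [β C, 0_{(n−m−p)}, P_R] with P_R ∈ ℝ^{m×m} symmetric positive definite, then for every x ∈ ℝⁿ with C x = 0 (where C ∈ ℝ^{p×n} acts on the first p coordinates), x ᵀ (A_Rᵀ P A_R − P) x ≤ 0. -/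
/-! With `x = (x₁, x₂)`, the jump `A_R = diag(I, 0)` changes the quadratic form of a symmetric `P`
by `-(2 x₂ᵀ P₂₁ x₁ + x₂ᵀ P₂₂ x₂)`. The structural constraint `P₂₁ = β cᵀ` turns the cross term
into `(x₂ ⬝ β) (c ⬝ x₁)`, which vanishes on the reset surface `c ⬝ x₁ = 0`, leaving
`-x₂ᵀ P_R x₂ ≤ 0`. -/

open Matrix

namespace Matrix

variable {k m R : Type*} [Fintype k] [Fintype m] [CommRing R]

theorem sumElim_dotProduct_fromBlocks_mulVec_sumElim (A : Matrix k k R) (B : Matrix k m R)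
    (C : Matrix m k R) (D : Matrix m m R) (u : k → R) (v : m → R) :
    Sum.elim u v ⬝ᵥ fromBlocks A B C D *ᵥ Sum.elim u v
      = u ⬝ᵥ A *ᵥ u + u ⬝ᵥ B *ᵥ v + v ⬝ᵥ C *ᵥ u + v ⬝ᵥ D *ᵥ v := by
  rw [fromBlocks_mulVec, sumElim_dotProduct_sumElim, Sum.elim_comp_inl, Sum.elim_comp_inr,
    dotProduct_add, dotProduct_add]
  ring

theorem dotProduct_vecMulVec_mulVec (w a : m → R) (b v : k → R) :
    w ⬝ᵥ vecMulVec a b *ᵥ v = (w ⬝ᵥ a) * (b ⬝ᵥ v) := by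
  rw [vecMulVec_mulVec, op_smul_eq_smul, dotProduct_smul, smul_eq_mul, mul_comm]

variable [DecidableEq k] [DecidableEq m]

theorem fromBlocks_one_zero_transpose_mul_mul_sub (P : Matrix (k ⊕ m) (k ⊕ m) R) :
    (fromBlocks 1 0 0 0 : Matrix (k ⊕ m) (k ⊕ m) R)ᵀ * P * fromBlocks 1 0 0 0 - P
      = fromBlocks 0 (-P.toBlocks₁₂) (-P.toBlocks₂₁) (-P.toBlocks₂₂) := by
  conv_lhs => rw [← fromBlocks_toBlocks P]
  rw [fromBlocks_transpose, fromBlocks_multiply, fromBlocks_multiply, sub_eq_add_neg,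
    fromBlocks_neg, fromBlocks_add]
  simp

theorem IsSymm.dotProduct_fromBlocks_one_zero_conj_sub_mulVec {P : Matrix (k ⊕ m) (k ⊕ m) R}
    (hP : P.IsSymm) (x : k ⊕ m → R) :
    x ⬝ᵥ ((Matrix.fromBlocks 1 0 0 0)ᵀ * P * Matrix.fromBlocks 1 0 0 0 - P) *ᵥ x
      = -(2 * ((x ∘ Sum.inr) ⬝ᵥ P.toBlocks₂₁ *ᵥ (x ∘ Sum.inl))
          + (x ∘ Sum.inr) ⬝ᵥ P.toBlocks₂₂ *ᵥ (x ∘ Sum.inr)) := by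
  have hB : P.toBlocks₁₂ = P.toBlocks₂₁ᵀ := by
    ext i j
    exact (hP.apply (Sum.inl i) (Sum.inr j)).symm
  rw [fromBlocks_one_zero_transpose_mul_mul_sub, ← Sum.elim_comp_inl_inr x,
    sumElim_dotProduct_fromBlocks_mulVec_sumElim, hB]
  simp only [Sum.elim_comp_inl, Sum.elim_comp_inr, neg_mulVec, dotProduct_neg, zero_mulVec,
    dotProduct_zero, dotProduct_transpose_mulVec]
  ring

end Matrix

theorem hbeta_structural_jump_condition_general
    (k m : ℕ)
    (P : Matrix (Fin k ⊕ Fin m) (Fin k ⊕ Fin m) ℝ)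
    (hPsymm : P.IsSymm)
    (AR : Matrix (Fin k ⊕ Fin m) (Fin k ⊕ Fin m) ℝ)
    (hAR : AR = Matrix.fromBlocks 1 0 0 0)
    (c : Fin k → ℝ)
    (β : Fin m → ℝ)
    (PR : Matrix (Fin m) (Fin m) ℝ) (hPRpos : PR.PosDef)
    (hstruct₁ : ∀ (j : Fin m) (i : Fin k), P (Sum.inr j) (Sum.inl i) = β j * c i)
    (hstruct₂ : ∀ j j' : Fin m, P (Sum.inr j) (Sum.inr j') = PR j j')
    (x : Fin k ⊕ Fin m → ℝ)
    (hx : ∑ i, c i * x (Sum.inl i) = 0) :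
    x ⬝ᵥ ((AR.transpose * P * AR - P).mulVec x) ≤ 0 := by
  have h₂₁ : P.toBlocks₂₁ = vecMulVec β c := by
    ext j i
    exact hstruct₁ j i
  have h₂₂ : P.toBlocks₂₂ = PR := by
    ext j j'
    exact hstruct₂ j j'
  have hreset : c ⬝ᵥ (x ∘ Sum.inl) = 0 := hx
  rw [hAR, hPsymm.dotProduct_fromBlocks_one_zero_conj_sub_mulVec, h₂₁, h₂₂,
    dotProduct_vecMulVec_mulVec, hreset, mul_zero, mul_zero, zero_add, neg_nonpos]
  simpa only [star_trivial] using hPRpos.posSemidef.dotProduct_mulVec_nonneg (x ∘ Sum.inr)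

/-- Key algebraic step of the `H_β`-condition: if the last `m` rows of a symmetric
positive definite `P` have the structure `[βC, 0, P_R]` (the outer product `β Cᵀ` on the
first block, supported on the first `p` coordinates, and a positive definite `P_R` on
the last block), then the jump map `x ↦ A_R x` with `A_R = diag(I, 0)` does not increase
the quadratic form on the reset surface `{x : Cx = 0}`. -/
theorem hbeta_structural_jump_condition
    (k m p : ℕ)
    (P : Matrix (Fin k ⊕ Fin m) (Fin k ⊕ Fin m) ℝ)
    (hPsymm : P.IsSymm) (hPpos : P.PosDef)
    (AR : Matrix (Fin k ⊕ Fin m) (Fin k ⊕ Fin m) ℝ)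
    (hAR : AR = Matrix.fromBlocks 1 0 0 0)
    (c : Fin k → ℝ) (hc : ∀ i : Fin k, p ≤ (i : ℕ) → c i = 0)
    (β : Fin m → ℝ)
    (PR : Matrix (Fin m) (Fin m) ℝ) (hPRsymm : PR.IsSymm) (hPRpos : PR.PosDef)
    (hstruct₁ : ∀ (j : Fin m) (i : Fin k), P (Sum.inr j) (Sum.inl i) = β j * c i)
    (hstruct₂ : ∀ j j' : Fin m, P (Sum.inr j) (Sum.inr j') = PR j j')
    (x : Fin k ⊕ Fin m → ℝ)
    (hx : ∑ i, c i * x (Sum.inl i) = 0) :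
    x ⬝ᵥ ((AR.transpose * P * AR - P).mulVec x) ≤ 0 :=
  hbeta_structural_jump_condition_general k m P hPsymm AR hAR c β PR hPRpos hstruct₁ hstruct₂ x hx
end

section
/- With 𝐀 the pn×pn block companion matrix (identity superdiagonal blocks, A in the bottom-left block), 𝐁 = [0;…;0;B]ᵀ-stacked, 𝐂 = [C,0,…,0]: the transfer function 𝐂 (sI − 𝐀)^{−1} 𝐁 equals C (s^p I − A)^{−1} B, for all s ∈ ℂ such that s^p is not an eigenvalue of A. -/
/-!
A kernel vector of `s • 1 - 𝐀` has blocks `v₀, s v₀, …, s^(p-1) v₀` with `A v₀ = s^p v₀`, so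
`s^p ∉ σ(A)` forces it to vanish and `s • 1 - 𝐀` is invertible. With `Y = (s^p • 1 - A)⁻¹ B`, the
stack `[Y; s Y; …; s^(p-1) Y]` solves `(s • 1 - 𝐀) X = 𝐁`, and `𝐂` reads off its first block `Y`.
-/

open Matrix

variable {R : Type*} {n m l : Type*} [Fintype n] [DecidableEq n]

section CommRing

variable [CommRing R]

def blockCompanion (p : ℕ) (A : Matrix n n R) : Matrix (Fin p × n) (Fin p × n) R :=
  fun x y => if (y.1 : ℕ) = x.1 + 1 then (1 : Matrix n n R) x.2 y.2
    else if (x.1 : ℕ) = p - 1 ∧ (y.1 : ℕ) = 0 then A x.2 y.2 else 0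

def inLastBlockRow (p : ℕ) (B : Matrix n m R) : Matrix (Fin p × n) m R :=
  fun x j => if (x.1 : ℕ) = p - 1 then B x.2 j else 0

def inFirstBlockCol (p : ℕ) (C : Matrix l n R) : Matrix l (Fin p × n) R :=
  fun i y => if (y.1 : ℕ) = 0 then C i y.2 else 0

def stackPowers (p : ℕ) (s : R) (Y : Matrix n m R) : Matrix (Fin p × n) m R :=
  fun x j => s ^ (x.1 : ℕ) * Y x.2 j

variable {p : ℕ} (A : Matrix n n R) (v : Fin p × n → R)

theorem blockCompanion_mulVec_apply_of_lt {i : Fin p} (hi : (i : ℕ) + 1 < p) (a : n) :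
    (blockCompanion p A *ᵥ v) (i, a) = v (⟨i + 1, hi⟩, a) := by
  rw [mulVec, dotProduct, Finset.sum_eq_single (⟨i + 1, hi⟩, a)]
  · simp [blockCompanion]
  · rintro ⟨j, b⟩ - hjb
    have hi' : (i : ℕ) ≠ p - 1 := by omega
    by_cases hj : (j : ℕ) = i + 1
    · have hab : a ≠ b := by rintro rfl; exact hjb (by ext <;> simp [hj])
      simp [blockCompanion, hj, hab]
    · simp [blockCompanion, hj, hi']
  · simp

theorem blockCompanion_mulVec_apply_of_eq [NeZero p] {i : Fin p} (hi : (i : ℕ) = p - 1) (a : n) :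
    (blockCompanion p A *ᵥ v) (i, a) = (A *ᵥ fun b => v (0, b)) a := by
  rw [mulVec, dotProduct, Fintype.sum_prod_type, Finset.sum_eq_single 0]
  · simp only [blockCompanion, Fin.val_zero, hi, and_self, if_true]
    rfl
  · intro j _ hj
    have h1 : (j : ℕ) ≠ i + 1 := by omega
    have h2 : (j : ℕ) ≠ 0 := Fin.val_ne_zero_iff.mpr hj
    simp [blockCompanion, h1, h2]
  · simp

variable [NeZero p] {A} {s : R}

theorem smul_one_sub_blockCompanion_mul_stackPowers {B Y : Matrix n m R}
    (hY : (s ^ p • 1 - A) * Y = B) :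
    (s • 1 - blockCompanion p A) * stackPowers p s Y = inLastBlockRow p B := by
  ext ⟨i, a⟩ j
  rw [Matrix.sub_mul, Matrix.smul_mul, Matrix.one_mul, Matrix.sub_apply, Matrix.smul_apply,
    smul_eq_mul]
  change _ - (blockCompanion p A *ᵥ fun x => stackPowers p s Y x j) (i, a) = _
  by_cases hi : (i : ℕ) + 1 < p
  · rw [blockCompanion_mulVec_apply_of_lt _ _ hi]
    have hi' : (i : ℕ) ≠ p - 1 := by omega
    simp [stackPowers, inLastBlockRow, pow_succ', mul_assoc, hi']
  · have hi' : (i : ℕ) = p - 1 := by omega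
    rw [blockCompanion_mulVec_apply_of_eq _ _ hi', ← hY]
    simp only [stackPowers, inLastBlockRow, hi', Fin.val_zero, pow_zero, one_mul, if_true]
    rw [← mul_assoc, ← pow_succ', Nat.sub_add_cancel (NeZero.pos p), Matrix.sub_mul,
      Matrix.smul_mul, Matrix.one_mul]
    rfl

omit [DecidableEq n] in
theorem inFirstBlockCol_mul_stackPowers (C : Matrix l n R) (Y : Matrix n m R) :
    inFirstBlockCol p C * stackPowers p s Y = C * Y := by
  ext i j
  rw [mul_apply, Fintype.sum_prod_type, Finset.sum_eq_single 0]
  · simp [inFirstBlockCol, stackPowers, mul_apply]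
  · intro k _ hk; simp [inFirstBlockCol, Fin.val_ne_zero_iff.mpr hk]
  · simp

section Eigenvector

variable {v} (hv : blockCompanion p A *ᵥ v = s • v)
include hv

theorem blockCompanion_eigenvector_apply (i : Fin p) (a : n) :
    v (i, a) = s ^ (i : ℕ) * v (0, a) := by
  obtain ⟨k, hk⟩ := i
  induction k with
  | zero => simp
  | succ k ih =>
    have := congrFun hv (⟨k, by omega⟩, a)
    rw [blockCompanion_mulVec_apply_of_lt A v (i := ⟨k, _⟩) hk] at this
    rw [this, Pi.smul_apply, smul_eq_mul, ih (by omega), pow_succ']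
    ring

theorem blockCompanion_eigenvector_firstBlock :
    (A *ᵥ fun b => v (0, b)) = s ^ p • fun b => v (0, b) := by
  ext a
  have hp := NeZero.pos p
  let last : Fin p := ⟨p - 1, by omega⟩
  calc (A *ᵥ fun b => v (0, b)) a
      = (blockCompanion p A *ᵥ v) (last, a) := (blockCompanion_mulVec_apply_of_eq A v rfl a).symm
    _ = s * (s ^ (p - 1) * v (0, a)) := by
      rw [hv, Pi.smul_apply, smul_eq_mul, blockCompanion_eigenvector_apply hv]
    _ = s ^ p * v (0, a) := by rw [← mul_assoc, ← pow_succ', Nat.sub_add_cancel hp]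

end Eigenvector

end CommRing

theorem isUnit_smul_one_sub_of_notMem_spectrum {S A : Type*} [CommSemiring S] [Ring A]
    [Algebra S A] {r : S} {a : A} (h : r ∉ spectrum S a) : IsUnit (r • 1 - a) := by
  rwa [spectrum.notMem_iff, Algebra.algebraMap_eq_smul_one] at h

section Field

variable {K : Type*} [Field K] {p : ℕ} [NeZero p]

theorem isUnit_smul_one_sub_blockCompanion {A : Matrix n n K} {s : K}
    (hs : s ^ p ∉ spectrum K A) :
    IsUnit (s • (1 : Matrix (Fin p × n) (Fin p × n) K) - blockCompanion p A) := by
  rw [isUnit_iff_isUnit_det, isUnit_iff_ne_zero, ne_eq, ← exists_mulVec_eq_zero_iff]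
  rintro ⟨v, hv0, hv⟩
  have heig : blockCompanion p A *ᵥ v = s • v := by
    rw [sub_mulVec, smul_mulVec, one_mulVec, sub_eq_zero] at hv
    exact hv.symm
  have h0 : (fun b => v (0, b)) = 0 := by
    apply mulVec_injective_iff_isUnit.mpr (isUnit_smul_one_sub_of_notMem_spectrum hs)
    rw [mulVec_zero, sub_mulVec, smul_mulVec, one_mulVec,
      blockCompanion_eigenvector_firstBlock heig, sub_self]
  apply hv0
  ext ⟨i, a⟩
  rw [blockCompanion_eigenvector_apply heig, congrFun h0 a]
  simp

end Field

/-- The augmented fractional realization has the original input-output behavior: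
`CC (sI - AA)⁻¹ BB = C (s^p I - A)⁻¹ B` for all `s` such that `s^p` is not an
eigenvalue of `A`. -/
theorem augmented_realization_transfer_function
    (n p : ℕ) (hp : 1 ≤ p)
    (A : Matrix (Fin n) (Fin n) ℂ) (B : Matrix (Fin n) (Fin 1) ℂ)
    (C : Matrix (Fin 1) (Fin n) ℂ)
    (AA : Matrix (Fin p × Fin n) (Fin p × Fin n) ℂ)
    (BB : Matrix (Fin p × Fin n) (Fin 1) ℂ)
    (CC : Matrix (Fin 1) (Fin p × Fin n) ℂ)
    (hAA : ∀ (i j : Fin p) (a b : Fin n),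
      AA (i, a) (j, b) =
        if (j : ℕ) = (i : ℕ) + 1 then (if a = b then 1 else 0)
        else if (i : ℕ) = p - 1 ∧ (j : ℕ) = 0 then A a b else 0)
    (hBB : ∀ (i : Fin p) (a : Fin n) (j : Fin 1),
      BB (i, a) j = if (i : ℕ) = p - 1 then B a j else 0)
    (hCC : ∀ (i : Fin 1) (j : Fin p) (b : Fin n),
      CC i (j, b) = if (j : ℕ) = 0 then C i b else 0)
    (s : ℂ) (hs : s ^ p ∉ spectrum ℂ A) :
    CC * (s • (1 : Matrix (Fin p × Fin n) (Fin p × Fin n) ℂ) - AA)⁻¹ * BB =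
      C * (s ^ p • (1 : Matrix (Fin n) (Fin n) ℂ) - A)⁻¹ * B := by
  have : NeZero p := ⟨by omega⟩
  obtain rfl : AA = blockCompanion p A := by
    ext ⟨i, a⟩ ⟨j, b⟩
    simp [hAA, blockCompanion, one_apply]
  obtain rfl : BB = inLastBlockRow p B := by
    ext ⟨i, a⟩ j
    exact hBB i a j
  obtain rfl : CC = inFirstBlockCol p C := by
    ext i ⟨j, b⟩
    exact hCC i j b
  have hA := (isUnit_iff_isUnit_det _).mp (isUnit_smul_one_sub_of_notMem_spectrum hs)
  have hM := (isUnit_iff_isUnit_det _).mp (isUnit_smul_one_sub_blockCompanion hs)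
  have hY : (s ^ p • 1 - A) * ((s ^ p • 1 - A)⁻¹ * B) = B := mul_nonsing_inv_cancel_left _ _ hA
  rw [Matrix.mul_assoc, ← smul_one_sub_blockCompanion_mul_stackPowers hY,
    nonsing_inv_mul_cancel_left _ _ hM, inFirstBlockCol_mul_stackPowers, Matrix.mul_assoc]
end

section
/- Let H_β(s) = (s² + 0.9s + 0.45 + β(0.29s + 0.84)) / (s³ + 1.35s² + 1.35s + 1). For β = 0.3, Re H_β(iω) > 0 for all real ω, i.e. |arg H_β(iω)| < π/2 for all ω at which H_β(iω) ≠ 0. -/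
/-!
On the imaginary axis `Re H(iω)` has the sign of `Re (N(iω) · conj D(iω))`, where `H = N / D`.
This is the even quartic `0.363 ω⁴ - 0.61525 ω² + 0.702`, a quadratic in `ω²` with positive
leading coefficient and negative discriminant, hence positive for every real `ω`.
-/

open Real
open ComplexConjugate

theorem quadratic_pos_of_discrim_neg {K : Type*} [CommRing K] [LinearOrder K]
    [IsStrictOrderedRing K] {a b c : K} (ha : 0 < a) (h : discrim a b c < 0) (x : K) :
    0 < a * (x * x) + b * x + c := by
  have hsq : 4 * a * (a * (x * x) + b * x + c) = (2 * a * x + b) ^ 2 - discrim a b c := by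
    rw [discrim]; ring
  have hprod : 0 < 4 * a * (a * (x * x) + b * x + c) := by
    rw [hsq]; nlinarith [sq_nonneg (2 * a * x + b)]
  exact pos_of_mul_pos_right hprod (by positivity)

theorem Complex.re_div_pos_of_re_mul_conj_pos {z w : ℂ} (h : 0 < (z * conj w).re) :
    0 < (z / w).re := by
  have hw : w ≠ 0 := by rintro rfl; simp at h
  have hre : (z / w).re = (z * conj w).re / Complex.normSq w := by
    rw [Complex.div_re, Complex.mul_re, Complex.conj_re, Complex.conj_im]; ring
  rw [hre]
  exact div_pos h (Complex.normSq_pos.2 hw)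

theorem re_hbeta_num_mul_conj_den_imaginary_axis (ω : ℝ) :
    (((Complex.I * ω) ^ 2 + 0.9 * (Complex.I * ω) + 0.45 +
        (0.3 : ℂ) * (0.29 * (Complex.I * ω) + 0.84)) *
      conj ((Complex.I * ω) ^ 3 + 1.35 * (Complex.I * ω) ^ 2 + 1.35 * (Complex.I * ω) + 1)).re =
      363 / 1000 * (ω ^ 2 * ω ^ 2) - 2461 / 4000 * ω ^ 2 + 351 / 500 := by
  simp only [pow_succ, pow_zero, one_mul, map_add, map_mul, map_one, Complex.conj_I,
    Complex.conj_ofReal, Complex.conj_re, Complex.conj_im, Complex.mul_re, Complex.mul_im,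
    Complex.add_re, Complex.add_im, Complex.neg_re, Complex.neg_im, Complex.one_re,
    Complex.one_im, Complex.I_re, Complex.I_im, Complex.ofReal_re, Complex.ofReal_im,
    Complex.re_ofScientific, Complex.im_ofScientific]
  norm_num
  ring

/-- For `H_β(s) = (s² + 0.9s + 0.45 + β(0.29s + 0.84))/(s³ + 1.35s² + 1.35s + 1)` with
`β = 0.3`, one has `Re H_β(iω) > 0` for all real `ω`, hence `|arg H_β(iω)| < π/2`
wherever `H_β(iω) ≠ 0`. -/
theorem example2_hbeta_spr
    (H : ℂ → ℂ)
    (hH : ∀ s : ℂ, H s =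
      (s ^ 2 + 0.9 * s + 0.45 + (0.3 : ℂ) * (0.29 * s + 0.84)) /
        (s ^ 3 + 1.35 * s ^ 2 + 1.35 * s + 1)) :
    ∀ ω : ℝ, 0 < (H (Complex.I * (ω : ℂ))).re ∧
      (H (Complex.I * (ω : ℂ)) ≠ 0 → |Complex.arg (H (Complex.I * (ω : ℂ)))| < π / 2) := by
  intro ω
  have hquartic : 0 < 363 / 1000 * (ω ^ 2 * ω ^ 2) - 2461 / 4000 * ω ^ 2 + 351 / 500 := by
    have := quadratic_pos_of_discrim_neg (a := (363 / 1000 : ℝ)) (b := -2461 / 4000)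
      (c := 351 / 500) (by norm_num) (by rw [discrim]; norm_num) (ω ^ 2)
    linarith
  have hre : 0 < (H (Complex.I * ω)).re := by
    rw [hH]
    apply Complex.re_div_pos_of_re_mul_conj_pos
    rwa [re_hbeta_num_mul_conj_den_imaginary_axis]
  exact ⟨hre, fun _ => Complex.abs_arg_lt_pi_div_two_iff.2 (Or.inl hre)⟩
end

section
/- Let H_β(s) = (s² + 0.2s + 0.8β)/(s³ + 1.2s² + 1.2s + 1). For β = 0.5, the denominator s³ + 1.2s² + 1.2s + 1 is Hurwitz (all roots have negative real part) and Re H_β(iω) > 0 for all ω ∈ ℝ. -/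
/-! The denominator factors as `(s + 1)(s² + 0.2s + 1)`, and a monic real quadratic with
positive coefficients has all its roots in the open left half-plane, so the denominator is
Hurwitz; in particular it does not vanish on the imaginary axis. There
`Re H(iω) = Re (N(iω) · conj D(iω)) / |D(iω)|²`, and the numerator of this fraction is
`ω⁴ - 1.24ω² + 0.4 = (ω² - 0.62)² + 0.0156 > 0`. -/

open Complex ComplexConjugate

theorem Complex.re_neg_of_quadratic_eq_zero {b c : ℝ} (hb : 0 < b) (hc : 0 < c) {z : ℂ}
    (hz : z ^ 2 + b * z + c = 0) : z.re < 0 := by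
  have hre : z.re ^ 2 - z.im ^ 2 + b * z.re + c = 0 := by
    simpa [sq] using congrArg re hz
  have him : z.im * (2 * z.re + b) = 0 := by
    have := congrArg im hz
    simp only [sq, add_im, mul_im, ofReal_re, ofReal_im, zero_im] at this
    linear_combination this
  rcases mul_eq_zero.mp him with hy | hx
  · nlinarith [sq_nonneg z.re]
  · linarith

theorem Complex.re_div_pos {z w : ℂ} (hw : w ≠ 0) (h : 0 < (z * conj w).re) :
    0 < (z / w).re := by
  rw [div_re, ← add_div]
  simp only [mul_re, conj_re, conj_im] at h
  exact div_pos (by linarith) (normSq_pos.2 hw)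

theorem re_neg_of_example3_denominator_eq_zero {z : ℂ}
    (hz : z ^ 3 + 1.2 * z ^ 2 + 1.2 * z + 1 = 0) : z.re < 0 := by
  have hfac : (z + 1) * (z ^ 2 + (0.2 : ℝ) * z + (1 : ℝ)) = 0 := by
    push_cast
    linear_combination hz
  rcases mul_eq_zero.mp hfac with h | h
  · simp [eq_neg_of_add_eq_zero_left h]
  · exact re_neg_of_quadratic_eq_zero (by norm_num) one_pos h

theorem example3_re_numerator_mul_conj_denominator (ω : ℝ) :
    (((I * ω) ^ 2 + 0.2 * (I * ω) + 0.8 * (0.5 : ℂ)) *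
      conj ((I * ω) ^ 3 + 1.2 * (I * ω) ^ 2 + 1.2 * (I * ω) + 1)).re =
      ω ^ 4 - 1.24 * ω ^ 2 + 0.4 := by
  simp [pow_succ]
  norm_num
  ring

/-- For `H_β(s) = (s² + 0.2s + 0.8β)/(s³ + 1.2s² + 1.2s + 1)` with `β = 0.5`: the
denominator is Hurwitz and `Re H_β(iω) > 0` for all real `ω`. -/
theorem example3_fore_hbeta_spr
    (H : ℂ → ℂ)
    (hH : ∀ s : ℂ, H s =
      (s ^ 2 + 0.2 * s + 0.8 * (0.5 : ℂ)) / (s ^ 3 + 1.2 * s ^ 2 + 1.2 * s + 1)) :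
    (∀ z : ℂ, z ^ 3 + 1.2 * z ^ 2 + 1.2 * z + 1 = 0 → z.re < 0) ∧
    (∀ ω : ℝ, 0 < (H (Complex.I * (ω : ℂ))).re) := by
  refine ⟨fun z => re_neg_of_example3_denominator_eq_zero, fun ω => ?_⟩
  have hD : (I * ω) ^ 3 + 1.2 * (I * ω) ^ 2 + 1.2 * (I * ω) + 1 ≠ 0 := fun h =>
    (re_neg_of_example3_denominator_eq_zero h).ne (by simp)
  rw [hH]
  refine re_div_pos hD ?_
  rw [example3_re_numerator_mul_conj_denominator]
  nlinarith [sq_nonneg (ω ^ 2 - 0.62)]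
end

section
/- For H_β(s) = (s² + 0.2s + 0.8β)/(s³ + 0.2s² + s + 1) (the FORE H_β with b = 0, i.e. the Clegg integrator case), there is no β ∈ ℝ such that Re H_β(iω) > 0 for all ω ∈ ℝ; indeed the denominator s³ + 0.2s² + s + 1 is not Hurwitz. -/
/-- For the Clegg-integrator case `b = 0`,
`H_β(s) = (s² + 0.2s + 0.8β)/(s³ + 0.2s² + s + 1)`: the denominator is not Hurwitz
(it has a root with nonnegative real part), and no `β` makes `Re H_β(iω) > 0`
for all real `ω`. -/
theorem example3_clegg_hbeta_not_spr
    (H : ℝ → ℂ → ℂ)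
    (hH : ∀ (β : ℝ) (s : ℂ), H β s =
      (s ^ 2 + 0.2 * s + 0.8 * (β : ℂ)) / (s ^ 3 + 0.2 * s ^ 2 + s + 1)) :
    (∃ z : ℂ, z ^ 3 + 0.2 * z ^ 2 + z + 1 = 0 ∧ 0 ≤ z.re) ∧
    ¬∃ β : ℝ, ∀ ω : ℝ, 0 < (H β (Complex.I * (ω : ℂ))).re := by
  constructor
  · -- part 1: root with nonneg real part
    have hf : Continuous fun x : ℝ => x^3 + (1/5)*x^2 + x + 1 := by continuity
    have hsub := intermediate_value_Icc (by norm_num : (-1:ℝ) ≤ -1/5) hf.continuousOn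
    have hmem : (0:ℝ) ∈ Set.Icc ((fun x : ℝ => x^3 + (1/5)*x^2 + x + 1) (-1))
        ((fun x : ℝ => x^3 + (1/5)*x^2 + x + 1) (-1/5)) := by
      constructor <;> norm_num
    obtain ⟨r, hrmem, hr⟩ := hsub hmem
    simp only at hr
    obtain ⟨hr1, hr2⟩ := hrmem
    have hnn : 0 ≤ (1 + r^2 + r/5) - (r+1/5)^2/4 := by nlinarith
    set t : ℝ := Real.sqrt ((1 + r^2 + r/5) - (r+1/5)^2/4) with htdef
    have ht2 : t^2 = (1 + r^2 + r/5) - (r+1/5)^2/4 := Real.sq_sqrt hnn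
    have hrC : (r:ℂ)^3 + (1/5)*(r:ℂ)^2 + (r:ℂ) + 1 = 0 := by
      have := congrArg (Complex.ofReal) hr
      push_cast at this
      linear_combination this
    have ht2C : (t:ℂ)^2 = (1 + (r:ℂ)^2 + (r:ℂ)/5) - ((r:ℂ)+1/5)^2/4 := by
      have := congrArg (Complex.ofReal) ht2
      push_cast at this
      linear_combination this
    set z : ℂ := (↑(-(r+1/5)/2) : ℂ) + (t:ℂ) * Complex.I with hzdef
    have hz : z^2 + ((r:ℂ)+1/5)*z + (1 + (r:ℂ)^2 + (r:ℂ)/5) = 0 := by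
      rw [hzdef]; push_cast
      linear_combination (t:ℂ)^2 * Complex.I_sq - ht2C
    refine ⟨z, ?_, ?_⟩
    · linear_combination (z - (r:ℂ)) * hz + hrC
    · rw [hzdef]
      simp [Complex.add_re, Complex.mul_re]
      norm_num at hr2 ⊢
      linarith
  · -- part 2
    rintro ⟨β, h⟩
    have h5 := h (Real.sqrt 5)
    rw [hH] at h5
    set ω := Real.sqrt 5 with hωdef
    have hω2 : ω^2 = 5 := Real.sq_sqrt (by norm_num)
    have hω2C : (ω:ℂ)^2 = 5 := by exact_mod_cast congrArg Complex.ofReal hω2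
    have hωpos : (0:ℝ) < ω := Real.sqrt_pos.mpr (by norm_num)
    have hden : (Complex.I*ω)^3 + 0.2*(Complex.I*ω)^2 + Complex.I*ω + 1
        = -4*Complex.I*ω := by
      linear_combination (Complex.I^3*(ω:ℂ) + 0.2*Complex.I^2) * hω2C
        + (5*Complex.I*(ω:ℂ) + 0.2*(ω:ℂ)^2 + 1 - (ω:ℂ)^2/5) * Complex.I_sq
    have hN : (Complex.I*(ω:ℂ))^2 + 0.2*(Complex.I*(ω:ℂ)) + 0.8*(β:ℂ)
        = (↑(4*β/5 - 5) : ℂ) + (↑(ω/5) : ℂ) * Complex.I := by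
      push_cast
      linear_combination (ω:ℂ)^2 * Complex.I_sq - hω2C
    rw [hden, hN] at h5
    simp [Complex.div_re, Complex.normSq_apply, Complex.add_re, Complex.add_im,
      Complex.mul_re, Complex.mul_im] at h5
    rw [div_pos_iff] at h5
    rcases h5 with ⟨h5a, h5b⟩ | ⟨h5a, h5b⟩ <;> nlinarith [hω2, hωpos]
end
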